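/- arXiv:2605.24610 — 5 statements merged into one kernel-verified Lean document; each statement's English description precedes it below -/
import Mathlib

section
/- Let n, k ≥ 1 be integers with n = (k+1)(k+4)/2, let X₁,…,X_k be constant real n×n matrices, let R : ℝ^k → Matrix n n ℝ be a smooth map satisfying ∂R/∂x_i (x) = R(x)·X_i for every i and every x ∈ ℝ^k, and det R(x) = 1 for all x, and let v : ℝ → ℝⁿ be a smooth map. Define F : ℝ^k × ℝ → ℝⁿ by F(x,z) = R(x)·v(z). Then for every (x,z), the determinant of the n×n matrix whose columns are ∂_{x₁}F, …, ∂_{x_k}F, ∂_z F, the second derivatives ∂_{x_i x_j}F for 1 ≤ i ≤ j ≤ k, the mixed derivatives ∂_{x_i z}F for 1 ≤ i ≤ k, and ∂_{zz}F (in this order) equals the determinant of the n×n matrix with columns X₁v(z), …, X_k v(z), v'(z), X_iX_j v(z) for 1 ≤ i ≤ j ≤ k, X_i v'(z) for 1 ≤ i ≤ k, and v''(z) (in this order). In particular, this determinant depends only on z and not on x. -/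
open Matrix

/-- Partial derivative in the `i`-th coordinate direction of a map defined on `ℝ^k`. -/
noncomputable def pd {k : ℕ} {E : Type*} [NormedAddCommGroup E] [NormedSpace ℝ E]
    (i : Fin k) (g : (Fin k → ℝ) → E) (x : Fin k → ℝ) : E :=
  deriv (fun t => g (Function.update x i t)) (x i)

/-- Index type enumerating, in order: the `k` first derivatives in the `x`-variables,
the derivative in `z`, the second derivatives `∂_{x_i x_j}` for `i ≤ j`, the mixed
derivatives `∂_{x_i z}`, and `∂_{zz}`. -/
abbrev OscIdx (k : ℕ) :=
  (Fin k ⊕ Unit) ⊕ ({p : Fin k × Fin k // p.1 ≤ p.2} ⊕ (Fin k ⊕ Unit))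

/-- The columns of the osculating matrix of `F : ℝ^k × ℝ → ℝ^n` at `(x, z)`,
in the order `∂_{x_i}F, ∂_zF, ∂_{x_i x_j}F (i ≤ j), ∂_{x_i z}F, ∂_{zz}F`. -/
noncomputable def oscCols (k n : ℕ) (F : (Fin k → ℝ) → ℝ → Fin n → ℝ)
    (x : Fin k → ℝ) (z : ℝ) : OscIdx k → Fin n → ℝ
  | .inl (.inl i) => pd i (fun x' => F x' z) x
  | .inl (.inr _) => deriv (fun z' => F x z') z
  | .inr (.inl ⟨(i, j), _⟩) => pd i (pd j fun x' => F x' z) x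
  | .inr (.inr (.inl i)) => pd i (fun x' => deriv (fun z' => F x' z') z) x
  | .inr (.inr (.inr _)) => deriv (fun z' => deriv (fun z'' => F x z'') z') z

/-- The corresponding columns built from the loop `v` and the matrices `X_i`, in the
order `X_i v(z), v'(z), X_i X_j v(z) (i ≤ j), X_i v'(z), v''(z)`. -/
noncomputable def targetCols (k n : ℕ) (X : Fin k → Matrix (Fin n) (Fin n) ℝ)
    (v : ℝ → Fin n → ℝ) (z : ℝ) : OscIdx k → Fin n → ℝ
  | .inl (.inl i) => X i *ᵥ v z
  | .inl (.inr _) => deriv v z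
  | .inr (.inl ⟨(i, j), _⟩) => X i *ᵥ (X j *ᵥ v z)
  | .inr (.inr (.inl i)) => X i *ᵥ deriv v z
  | .inr (.inr (.inr _)) => deriv (deriv v) z


lemma update_contDiff {k : ℕ} (x : Fin k → ℝ) (i : Fin k) :
    ContDiff ℝ (⊤ : ℕ∞) fun t : ℝ => Function.update x i t := by
  rw [contDiff_pi]
  intro j
  rcases eq_or_ne j i with h | h
  · subst h; simp; exact contDiff_id
  · simpa [Function.update_apply, h] using (contDiff_const (c := x j))

lemma deriv_mulVec_const {n : ℕ} (A : Matrix (Fin n) (Fin n) ℝ) (w : ℝ → Fin n → ℝ)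
    (hw : Differentiable ℝ w) (t₀ : ℝ) :
    deriv (fun t => A *ᵥ w t) t₀ = A *ᵥ deriv w t₀ := by
  have hwc : ∀ b, Differentiable ℝ fun t => w t b := fun b => differentiable_pi.mp hw b
  have hderiv : deriv w t₀ = fun b => deriv (fun t => w t b) t₀ :=
    deriv_pi (fun b => (hwc b) t₀)
  rw [deriv_pi]
  · funext a
    simp only [mulVec, dotProduct, hderiv]
    rw [deriv_fun_sum (fun b _ => ((hwc b) t₀).const_mul _)]
    congr 1
    funext b
    rw [deriv_const_mul _ ((hwc b) t₀)]
  · intro a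
    simp only [mulVec, dotProduct]
    exact DifferentiableAt.fun_sum (fun b _ => ((hwc b) t₀).const_mul _)

lemma pd_mulVec_const {k n : ℕ} (X : Fin k → Matrix (Fin n) (Fin n) ℝ)
    (R : (Fin k → ℝ) → Matrix (Fin n) (Fin n) ℝ)
    (hRsmooth : ∀ a b : Fin n, ContDiff ℝ (⊤ : ℕ∞) fun x => R x a b)
    (hRderiv : ∀ (i : Fin k) (x : Fin k → ℝ) (a b : Fin n),
      deriv (fun t => R (Function.update x i t) a b) (x i) = (R x * X i) a b)
    (w : Fin n → ℝ) (i : Fin k) (x : Fin k → ℝ) :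
    pd i (fun x' => R x' *ᵥ w) x = R x *ᵥ (X i *ᵥ w) := by
  have hRe : ∀ a b : Fin n, Differentiable ℝ fun t : ℝ => R (Function.update x i t) a b :=
    fun a b => (((hRsmooth a b).comp (update_contDiff x i)).differentiable (by simp))
  unfold pd
  rw [deriv_pi]
  · funext a
    rw [mulVec_mulVec]
    simp only [mulVec, dotProduct]
    rw [deriv_fun_sum (fun b _ => ((hRe a b) (x i)).mul_const _)]
    congr 1
    funext b
    rw [deriv_mul_const ((hRe a b) (x i)), hRderiv i x a b]
  · intro a
    simp only [mulVec, dotProduct]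
    exact DifferentiableAt.fun_sum (fun b _ => ((hRe a b) (x i)).mul_const _)

/-- if `F(x,z) = R(x)·v(z)` with `∂R/∂x_i = R·X_i` and `det R = 1`, then
the determinant of the osculating matrix of `F` (columns in the order
`∂_{x_i}F, ∂_zF, ∂_{x_i x_j}F (i ≤ j), ∂_{x_i z}F, ∂_{zz}F`, for any identification
`e` of the index set with `Fin n`) equals the determinant of the matrix with columns
`X_i v(z), v'(z), X_i X_j v(z) (i ≤ j), X_i v'(z), v''(z)` (in the same order);
in particular it depends only on `z` and not on `x`. -/
theorem factorization_osculating_det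
    (k n : ℕ) (hk : 1 ≤ k) (hn : 1 ≤ n) (hnk : 2 * n = (k + 1) * (k + 4))
    (X : Fin k → Matrix (Fin n) (Fin n) ℝ)
    (R : (Fin k → ℝ) → Matrix (Fin n) (Fin n) ℝ)
    (hRsmooth : ∀ a b : Fin n, ContDiff ℝ (⊤ : ℕ∞) fun x => R x a b)
    (hRderiv : ∀ (i : Fin k) (x : Fin k → ℝ) (a b : Fin n),
      deriv (fun t => R (Function.update x i t) a b) (x i) = (R x * X i) a b)
    (hRdet : ∀ x, (R x).det = 1)
    (v : ℝ → Fin n → ℝ) (hv : ContDiff ℝ (⊤ : ℕ∞) v)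
    (F : (Fin k → ℝ) → ℝ → Fin n → ℝ)
    (hF : ∀ x z, F x z = R x *ᵥ v z)
    (x : Fin k → ℝ) (z : ℝ) (e : OscIdx k ≃ Fin n) :
    (Matrix.of fun (a b : Fin n) => oscCols k n F x z (e.symm b) a).det
      = (Matrix.of fun (a b : Fin n) => targetCols k n X v z (e.symm b) a).det := by
  have hvd : Differentiable ℝ v := hv.differentiable (by simp)
  have hv' : Differentiable ℝ (deriv v) :=
    (contDiff_infty_iff_deriv.mp (hv.of_le (by simp))).2.differentiable (by simp)
  have hcols : ∀ idx, oscCols k n F x z idx = R x *ᵥ targetCols k n X v z idx := by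
    rintro ((i | _) | (⟨⟨i, j⟩, hij⟩ | (i | _)))
    · show pd i (fun x' => F x' z) x = R x *ᵥ (X i *ᵥ v z)
      simp only [hF]
      exact pd_mulVec_const X R hRsmooth hRderiv (v z) i x
    · show deriv (fun z' => F x z') z = R x *ᵥ deriv v z
      simp only [hF]
      exact deriv_mulVec_const (R x) v hvd z
    · show pd i (pd j fun x' => F x' z) x = R x *ᵥ (X i *ᵥ (X j *ᵥ v z))
      have h1 : (pd j fun x' => F x' z) = fun x' => R x' *ᵥ (X j *ᵥ v z) := by
        funext x'
        simp only [hF]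
        exact pd_mulVec_const X R hRsmooth hRderiv (v z) j x'
      rw [h1]
      exact pd_mulVec_const X R hRsmooth hRderiv (X j *ᵥ v z) i x
    · show pd i (fun x' => deriv (fun z' => F x' z') z) x = R x *ᵥ (X i *ᵥ deriv v z)
      have h1 : (fun x' => deriv (fun z' => F x' z') z) = fun x' => R x' *ᵥ deriv v z := by
        funext x'
        simp only [hF]
        exact deriv_mulVec_const (R x') v hvd z
      rw [h1]
      exact pd_mulVec_const X R hRsmooth hRderiv (deriv v z) i x
    · show deriv (fun z' => deriv (fun z'' => F x z'') z') z = R x *ᵥ deriv (deriv v) z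
      have h1 : (fun z' => deriv (fun z'' => F x z'') z') = fun z' => R x *ᵥ deriv v z' := by
        funext z'
        simp only [hF]
        exact deriv_mulVec_const (R x) v hvd z'
      rw [h1]
      exact deriv_mulVec_const (R x) (deriv v) hv' z
  have hM : (Matrix.of fun (a b : Fin n) => oscCols k n F x z (e.symm b) a)
      = R x * (Matrix.of fun (a b : Fin n) => targetCols k n X v z (e.symm b) a) := by
    ext a b
    simp [Matrix.mul_apply, hcols, mulVec, dotProduct]
  rw [hM, Matrix.det_mul, hRdet, one_mul]
end

section
/- Define F₂ : ℝ² → ℝ⁵ by F₂(x,y) = (2cos x − (1+sin y)sin x, 2sin x + (1+sin y)cos x, cos(2x+y) − (1/2)sin(2x), sin(2x+y) + (1/2)cos(2x), cos y). Then for every (x,y) ∈ ℝ², the determinant of the 5×5 matrix whose columns are, in order, ∂ₓF₂, ∂_yF₂, ∂ₓₓF₂, ∂ₓᵧF₂, ∂ᵧᵧF₂ (all evaluated at (x,y)) equals D(y) = −4 sin y + (5/2) sin(2y) + 15 cos y − 4 cos(2y) − 12; in particular, it is independent of x. -/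
/-!
`F₂` is equivariant for a circle action: `F₂ x y = ρ x *ᵥ g y`, where `ρ x = exp (x A)`
(`circleAction`, with generator `circleGenerator`) rotates the first coordinate plane by `x` and
the second by `2 x`. Differentiating in `x` multiplies by `A`, so each of the five partial
derivatives is `ρ x` applied to a vector depending only on `y`. As `det (ρ x) = 1`, the
determinant equals the one at `x = 0`, a trigonometric polynomial in `y`.
-/

open Real

/-- The explicit map `F₂ : ℝ² → ℝ⁵` inducing a free map of the 2-torus. -/
noncomputable def F₂ (x y : ℝ) : Fin 5 → ℝ :=
  ![2 * cos x - (1 + sin y) * sin x,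
    2 * sin x + (1 + sin y) * cos x,
    cos (2 * x + y) - (1 / 2) * sin (2 * x),
    sin (2 * x + y) + (1 / 2) * cos (2 * x),
    cos y]

open Matrix

theorem Matrix.hasDerivAt_mulVec {𝕜 m n : Type*} [NontriviallyNormedField 𝕜] [Fintype n]
    (M : Matrix m n 𝕜) {u : 𝕜 → n → 𝕜} {u' : n → 𝕜} {t : 𝕜} (hu : HasDerivAt u u' t) :
    HasDerivAt (fun s => M *ᵥ u s) (M *ᵥ u') t := by
  rw [hasDerivAt_pi] at hu ⊢
  exact fun i => HasDerivAt.fun_sum fun j _ => (hu j).const_mul (M i j)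

theorem Matrix.det_of_mulVec {R n : Type*} [CommRing R] [Fintype n] [DecidableEq n]
    (M : Matrix n n R) (c : n → n → R) :
    (of fun i j => (M *ᵥ c j) i).det = M.det * (of fun i j => c j i).det := by
  rw [← det_mul]
  rfl

noncomputable def circleAction (t : ℝ) : Matrix (Fin 5) (Fin 5) ℝ :=
  !![cos t, -sin t, 0, 0, 0;
     sin t, cos t, 0, 0, 0;
     0, 0, cos (2 * t), -sin (2 * t), 0;
     0, 0, sin (2 * t), cos (2 * t), 0;
     0, 0, 0, 0, 1]

def circleGenerator : Matrix (Fin 5) (Fin 5) ℝ :=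
  !![0, -1, 0, 0, 0;
     1, 0, 0, 0, 0;
     0, 0, 0, -2, 0;
     0, 0, 2, 0, 0;
     0, 0, 0, 0, 0]

theorem det_circleAction (t : ℝ) : (circleAction t).det = 1 := by
  simp [circleAction, det_succ_row_zero, Fin.sum_univ_succ, Fin.succAbove]
  linear_combination (sin t ^ 2 + cos t ^ 2) * sin_sq_add_cos_sq (2 * t) + sin_sq_add_cos_sq t

theorem hasDerivAt_circleAction_mulVec (v : Fin 5 → ℝ) (t : ℝ) :
    HasDerivAt (fun s => circleAction s *ᵥ v) (circleAction t *ᵥ (circleGenerator *ᵥ v)) t := by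
  have h₁ := hasDerivAt_id' t
  have h₂ : HasDerivAt (fun s => 2 * s) 2 t := by simpa using h₁.const_mul 2
  rw [hasDerivAt_pi]
  intro i
  fin_cases i <;>
    simp only [circleAction, circleGenerator, mulVec, dotProduct, Fin.sum_univ_five, of_apply,
      Fin.zero_eta, Fin.mk_one, Fin.reduceFinMk, Fin.isValue, cons_val', cons_val_fin_one, cons_val,
      cons_val_zero, cons_val_one, zero_mul, mul_zero, add_zero, zero_add, one_mul, neg_mul, mul_neg,
      neg_zero]
  · exact ((h₁.cos.mul_const _).fun_add (h₁.sin.mul_const _).fun_neg).congr_deriv (by ring)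
  · exact ((h₁.sin.mul_const _).fun_add (h₁.cos.mul_const _)).congr_deriv (by ring)
  · exact ((h₂.cos.mul_const _).fun_add (h₂.sin.mul_const _).fun_neg).congr_deriv (by ring)
  · exact ((h₂.sin.mul_const _).fun_add (h₂.cos.mul_const _)).congr_deriv (by ring)
  · exact hasDerivAt_const t _

noncomputable def profile (y : ℝ) : Fin 5 → ℝ := ![2, 1 + sin y, cos y, 1 / 2 + sin y, cos y]

noncomputable def profile' (y : ℝ) : Fin 5 → ℝ := ![0, cos y, -sin y, cos y, -sin y]

noncomputable def profile'' (y : ℝ) : Fin 5 → ℝ := ![0, -sin y, -cos y, -sin y, -cos y]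

theorem hasDerivAt_profile (y : ℝ) : HasDerivAt profile (profile' y) y := by
  rw [hasDerivAt_pi]
  intro i
  fin_cases i
  exacts [hasDerivAt_const y _, (hasDerivAt_sin y).const_add _, hasDerivAt_cos y,
    (hasDerivAt_sin y).const_add _, hasDerivAt_cos y]

theorem hasDerivAt_profile' (y : ℝ) : HasDerivAt profile' (profile'' y) y := by
  rw [hasDerivAt_pi]
  intro i
  fin_cases i
  exacts [hasDerivAt_const y _, hasDerivAt_cos y, (hasDerivAt_sin y).neg, hasDerivAt_cos y,
    (hasDerivAt_sin y).neg]

theorem F₂_eq_circleAction_mulVec (x y : ℝ) : F₂ x y = circleAction x *ᵥ profile y := by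
  ext i
  fin_cases i <;>
    simp [F₂, circleAction, profile, mulVec, dotProduct, Fin.sum_univ_five, cos_add, sin_add] <;>
    ring

theorem deriv_F₂_fst (y : ℝ) :
    deriv (fun x => F₂ x y) = fun x => circleAction x *ᵥ (circleGenerator *ᵥ profile y) := by
  ext1 x
  simp only [F₂_eq_circleAction_mulVec]
  exact (hasDerivAt_circleAction_mulVec _ x).deriv

theorem deriv_F₂_snd (x : ℝ) :
    deriv (fun y => F₂ x y) = fun y => circleAction x *ᵥ profile' y := by
  ext1 y
  simp only [F₂_eq_circleAction_mulVec]
  exact ((circleAction x).hasDerivAt_mulVec (hasDerivAt_profile y)).deriv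

theorem det_osculating_profile (y : ℝ) :
    (of fun i j => ![circleGenerator *ᵥ profile y, profile' y,
      circleGenerator *ᵥ (circleGenerator *ᵥ profile y), circleGenerator *ᵥ profile' y,
      profile'' y] j i).det
    = -4 * sin y + 5 / 2 * sin (2 * y) + 15 * cos y - 4 * cos (2 * y) - 12 := by
  simp [det_succ_row_zero, Fin.sum_univ_succ, Fin.succAbove, circleGenerator, profile,
    profile', profile'', dotProduct, sin_two_mul, cos_two_mul]
  linear_combination (8 * sin y ^ 2 * cos y - 8 * sin y ^ 2 + 5 * sin y * cos y - 4 * sin y +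
    8 * cos y ^ 3 - 16 * cos y ^ 2 + 15 * cos y - 8) * sin_sq_add_cos_sq y

/-- the determinant of the 5×5 matrix whose columns are
`∂ₓF₂, ∂ᵧF₂, ∂ₓₓF₂, ∂ₓᵧF₂, ∂ᵧᵧF₂` at `(x,y)` equals
`D(y) = −4 sin y + (5/2) sin 2y + 15 cos y − 4 cos 2y − 12`;
in particular it is independent of `x`. -/
theorem osculating_det_F₂ (x y : ℝ) :
    (Matrix.of fun (i j : Fin 5) =>
      ![deriv (fun x' => F₂ x' y) x,
        deriv (fun y' => F₂ x y') y,
        deriv (fun x' => deriv (fun x'' => F₂ x'' y) x') x,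
        deriv (fun y' => deriv (fun x' => F₂ x' y') x) y,
        deriv (fun y' => deriv (fun y'' => F₂ x y'') y') y] j i).det
    = -4 * sin y + 5 / 2 * sin (2 * y) + 15 * cos y - 4 * cos (2 * y) - 12 := by
  have hxx : deriv (fun x' => deriv (fun x'' => F₂ x'' y) x') x =
      circleAction x *ᵥ (circleGenerator *ᵥ (circleGenerator *ᵥ profile y)) := by
    rw [deriv_F₂_fst]
    exact (hasDerivAt_circleAction_mulVec _ x).deriv
  have hxy : deriv (fun y' => deriv (fun x' => F₂ x' y') x) y =
      circleAction x *ᵥ (circleGenerator *ᵥ profile' y) := by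
    simp only [deriv_F₂_fst]
    exact ((circleAction x).hasDerivAt_mulVec
      (circleGenerator.hasDerivAt_mulVec (hasDerivAt_profile y))).deriv
  have hyy : deriv (fun y' => deriv (fun y'' => F₂ x y'') y') y =
      circleAction x *ᵥ profile'' y := by
    rw [deriv_F₂_snd]
    exact ((circleAction x).hasDerivAt_mulVec (hasDerivAt_profile' y)).deriv
  rw [hxx, hxy, hyy, deriv_F₂_fst, deriv_F₂_snd]
  conv_rhs =>
    rw [← det_osculating_profile y, ← one_mul (det _), ← det_circleAction x, ← det_of_mulVec]
  congr 1
  ext i j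
  fin_cases j <;> rfl
end

section
/- Define s : ℝ → ℝ² by s(x) = (cos x, sin x) and f₂ : ℝ² → ℝ⁶ by f₂(x,y) = (cos x, sin x, cos y, sin y, cos(x+y), sin(x+y)). Then f₂ is free: for every (x,y) ∈ ℝ², the five vectors ∂ₓf₂, ∂ᵧf₂, ∂ₓₓf₂, ∂ₓᵧf₂, ∂ᵧᵧf₂ ∈ ℝ⁶ are linearly independent. Since f₂ is 2π-periodic in each variable, it induces a smooth free map of the 2-torus T² into ℝ⁶. -/
open Real

/-- The circle embedding `s(x) = (cos x, sin x)`. -/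
noncomputable def s (x : ℝ) : Fin 2 → ℝ := ![cos x, sin x]

/-- The map `f₂(x,y) = (s(x), s(y), s(x+y)) : ℝ² → ℝ⁶`. -/
noncomputable def f₂ (x y : ℝ) : Fin 6 → ℝ :=
  ![cos x, sin x, cos y, sin y, cos (x + y), sin (x + y)]

lemma hd1 (x y : ℝ) : HasDerivAt (fun x' => f₂ x' y)
    ![-sin x, cos x, 0, 0, -sin (x + y), cos (x + y)] x := by
  rw [hasDerivAt_pi]
  intro i
  fin_cases i <;> simp [f₂]
  · exact Real.hasDerivAt_cos x
  · exact Real.hasDerivAt_sin x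
  · exact hasDerivAt_const x _
  · exact hasDerivAt_const x _
  · simpa using (((hasDerivAt_id x).add_const y).cos)
  · simpa using (((hasDerivAt_id x).add_const y).sin)

lemma hd2 (x y : ℝ) : HasDerivAt (fun y' => f₂ x y')
    ![0, 0, -sin y, cos y, -sin (x + y), cos (x + y)] y := by
  rw [hasDerivAt_pi]
  intro i
  fin_cases i <;> simp [f₂]
  · exact hasDerivAt_const y _
  · exact hasDerivAt_const y _
  · exact Real.hasDerivAt_cos y
  · exact Real.hasDerivAt_sin y
  · simpa using (((hasDerivAt_id y).const_add x).cos)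
  · simpa using (((hasDerivAt_id y).const_add x).sin)

lemma hd11 (x y : ℝ) : HasDerivAt
    (fun x' => (![-sin x', cos x', 0, 0, -sin (x' + y), cos (x' + y)] : Fin 6 → ℝ))
    ![-cos x, -sin x, 0, 0, -cos (x + y), -sin (x + y)] x := by
  rw [hasDerivAt_pi]
  intro i
  fin_cases i <;> simp
  · simpa using (Real.hasDerivAt_sin x).fun_neg
  · exact Real.hasDerivAt_cos x
  · exact hasDerivAt_const x _
  · exact hasDerivAt_const x _
  · simpa using (((hasDerivAt_id x).add_const y).sin).fun_neg
  · simpa using (((hasDerivAt_id x).add_const y).cos)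

lemma hd12 (x y : ℝ) : HasDerivAt
    (fun y' => (![-sin x, cos x, 0, 0, -sin (x + y'), cos (x + y')] : Fin 6 → ℝ))
    ![0, 0, 0, 0, -cos (x + y), -sin (x + y)] y := by
  rw [hasDerivAt_pi]
  intro i
  fin_cases i <;> simp
  · exact hasDerivAt_const y _
  · exact hasDerivAt_const y _
  · exact hasDerivAt_const y _
  · exact hasDerivAt_const y _
  · simpa using (((hasDerivAt_id y).const_add x).sin).fun_neg
  · simpa using (((hasDerivAt_id y).const_add x).cos)

lemma hd22 (x y : ℝ) : HasDerivAt
    (fun y' => (![0, 0, -sin y', cos y', -sin (x + y'), cos (x + y')] : Fin 6 → ℝ))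
    ![0, 0, -cos y, -sin y, -cos (x + y), -sin (x + y)] y := by
  rw [hasDerivAt_pi]
  intro i
  fin_cases i <;> simp
  · exact hasDerivAt_const y _
  · exact hasDerivAt_const y _
  · simpa using (Real.hasDerivAt_sin y).fun_neg
  · exact Real.hasDerivAt_cos y
  · simpa using (((hasDerivAt_id y).const_add x).sin).fun_neg
  · simpa using (((hasDerivAt_id y).const_add x).cos)

/-- `f₂` is a free map: at every point the five vectors of first and
second partial derivatives are linearly independent in `ℝ⁶`. Moreover `f₂` is
`2π`-periodic in each variable, hence induces a smooth free map of `T²` into `ℝ⁶`. -/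
theorem f₂_free :
    (∀ x y : ℝ, LinearIndependent ℝ
      ![deriv (fun x' => f₂ x' y) x,
        deriv (fun y' => f₂ x y') y,
        deriv (fun x' => deriv (fun x'' => f₂ x'' y) x') x,
        deriv (fun y' => deriv (fun x' => f₂ x' y') x) y,
        deriv (fun y' => deriv (fun y'' => f₂ x y'') y') y])
    ∧ ContDiff ℝ (⊤ : ℕ∞) (fun p : ℝ × ℝ => f₂ p.1 p.2)
    ∧ (∀ x y : ℝ, f₂ (x + 2 * π) y = f₂ x y ∧ f₂ x (y + 2 * π) = f₂ x y) := by
  refine ⟨?_, ?_, ?_⟩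
  · intro x y
    have e1 : deriv (fun x' => f₂ x' y) x
        = ![-sin x, cos x, 0, 0, -sin (x + y), cos (x + y)] := (hd1 x y).deriv
    have e2 : deriv (fun y' => f₂ x y') y
        = ![0, 0, -sin y, cos y, -sin (x + y), cos (x + y)] := (hd2 x y).deriv
    have e11 : deriv (fun x' => deriv (fun x'' => f₂ x'' y) x') x
        = ![-cos x, -sin x, 0, 0, -cos (x + y), -sin (x + y)] := by
      have h : (fun x' => deriv (fun x'' => f₂ x'' y) x')
          = fun x' => (![-sin x', cos x', 0, 0, -sin (x' + y), cos (x' + y)] : Fin 6 → ℝ) :=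
        funext fun x' => (hd1 x' y).deriv
      rw [h]; exact (hd11 x y).deriv
    have e12 : deriv (fun y' => deriv (fun x' => f₂ x' y') x) y
        = ![0, 0, 0, 0, -cos (x + y), -sin (x + y)] := by
      have h : (fun y' => deriv (fun x' => f₂ x' y') x)
          = fun y' => (![-sin x, cos x, 0, 0, -sin (x + y'), cos (x + y')] : Fin 6 → ℝ) :=
        funext fun y' => (hd1 x y').deriv
      rw [h]; exact (hd12 x y).deriv
    have e22 : deriv (fun y' => deriv (fun y'' => f₂ x y'') y') y
        = ![0, 0, -cos y, -sin y, -cos (x + y), -sin (x + y)] := by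
      have h : (fun y' => deriv (fun y'' => f₂ x y'') y')
          = fun y' => (![0, 0, -sin y', cos y', -sin (x + y'), cos (x + y')] : Fin 6 → ℝ) :=
        funext fun y' => (hd2 x y').deriv
      rw [h]; exact (hd22 x y).deriv
    rw [e1, e2, e11, e12, e22]
    rw [Fintype.linearIndependent_iff]
    intro g hg
    rw [Fin.sum_univ_five] at hg
    simp only [Matrix.cons_val_zero, Matrix.cons_val_one, Matrix.head_cons] at hg
    have h0 : g 0 * -sin x + g 1 * 0 + g 2 * -cos x + g 3 * 0 + g 4 * 0 = 0 := congrFun hg 0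
    have h1 : g 0 * cos x + g 1 * 0 + g 2 * -sin x + g 3 * 0 + g 4 * 0 = 0 := congrFun hg 1
    have h2 : g 0 * 0 + g 1 * -sin y + g 2 * 0 + g 3 * 0 + g 4 * -cos y = 0 := congrFun hg 2
    have h3 : g 0 * 0 + g 1 * cos y + g 2 * 0 + g 3 * 0 + g 4 * -sin y = 0 := congrFun hg 3
    have h4 : g 0 * -sin (x + y) + g 1 * -sin (x + y) + g 2 * -cos (x + y)
        + g 3 * -cos (x + y) + g 4 * -cos (x + y) = 0 := congrFun hg 4
    have h5 : g 0 * cos (x + y) + g 1 * cos (x + y) + g 2 * -sin (x + y)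
        + g 3 * -sin (x + y) + g 4 * -sin (x + y) = 0 := congrFun hg 5
    have hg0 : g 0 = 0 := by
      linear_combination cos x * h1 - sin x * h0 - g 0 * sin_sq_add_cos_sq x
    have hg2 : g 2 = 0 := by
      linear_combination (-sin x) * h1 - cos x * h0 - g 2 * sin_sq_add_cos_sq x
    have hg1 : g 1 = 0 := by
      linear_combination cos y * h3 - sin y * h2 - g 1 * sin_sq_add_cos_sq y
    have hg4 : g 4 = 0 := by
      linear_combination (-sin y) * h3 - cos y * h2 - g 4 * sin_sq_add_cos_sq y
    have hg3 : g 3 = 0 := by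
      linear_combination (-sin (x + y)) * h5 - cos (x + y) * h4
        - (g 2 + g 3 + g 4) * sin_sq_add_cos_sq (x + y) - hg2 - hg4
    intro i
    fin_cases i <;> assumption
  · rw [contDiff_pi]
    intro i
    fin_cases i
    · exact Real.contDiff_cos.comp contDiff_fst
    · exact Real.contDiff_sin.comp contDiff_fst
    · exact Real.contDiff_cos.comp contDiff_snd
    · exact Real.contDiff_sin.comp contDiff_snd
    · exact Real.contDiff_cos.comp (contDiff_fst.add contDiff_snd)
    · exact Real.contDiff_sin.comp (contDiff_fst.add contDiff_snd)
  · intro x y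
    constructor <;> funext i <;>
      fin_cases i <;>
      simp [f₂, add_right_comm, ← add_assoc, Real.cos_add_two_pi, Real.sin_add_two_pi]
end

section
/- For every real number t, the polynomial p(t) = 917t¹⁰ + 752t⁹ + 829t⁸ + 32t⁷ − 1474t⁶ − 440t⁵ − 202t⁴ − 192t³ + 397t² + 232t + 45 is strictly positive. -/
/-- the degree-10 numerator of the osculating determinant of the
free map `F₃ : T³ → ℝ⁹` is strictly positive on `ℝ`. -/
theorem p_T3_pos (t : ℝ) :
    0 < 917 * t ^ 10 + 752 * t ^ 9 + 829 * t ^ 8 + 32 * t ^ 7 - 1474 * t ^ 6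
      - 440 * t ^ 5 - 202 * t ^ 4 - 192 * t ^ 3 + 397 * t ^ 2 + 232 * t + 45 := by
  have key : (916 : ℝ) * (917 * t ^ 10 + 752 * t ^ 9 + 829 * t ^ 8 + 32 * t ^ 7 - 1474 * t ^ 6
      - 440 * t ^ 5 - 202 * t ^ 4 - 192 * t ^ 3 + 397 * t ^ 2 + 232 * t + 45)
      = 40762 * (1 + (232/89) * t ^ 1 + (-575078946549/81524000000) * t ^ 2 + (-160875320793/20381000000) * t ^ 3 + (255388550777/40762000000) * t ^ 4 + (165178247277/40762000000) * t ^ 5) ^ 2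
      + (58854900242861/89000000) * (1 * t ^ 1 + (87518660900838/58854900242861) * t ^ 2 + (-114210923205830/58854900242861) * t ^ 3 + (-125216457875686/58854900242861) * t ^ 4 + (58991081592557/117709800485722) * t ^ 5) ^ 2
      + (6157110801792726886765768178492851/107822177244921352000000000000) * (1 * t ^ 2 + (1410840897723520632465477272900028/6157110801792726886765768178492851) * t ^ 3 + (-6638752464348029623690983978290846/6157110801792726886765768178492851) * t ^ 4 + (-1469205377332693254943535832697846/6157110801792726886765768178492851) * t ^ 5) ^ 2
      + (17958882778168078770280452838278491638071299/6157110801792726886765768178492851000000) * (1 * t ^ 3 + (2652775071253914635238461478773471372974659/17958882778168078770280452838278491638071299) * t ^ 4 + (-11583864983876654995463728814244855783865485/35917765556336157540560905676556983276142598) * t ^ 5) ^ 2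
      + (2364035982872129704025840422449636495620300088970731/2244860347271009846285056604784811454758912375000) * (1 * t ^ 4 + (632622740865030933366436456037486734450514187337609/12608191908651358421471148919731394643308267141177232) * t ^ 5) ^ 2
      + (13175207791567098029641338724962534106969062467468493586245631/25216383817302716842942297839462789286616534282354464000000) * (1 * t ^ 5) ^ 2
      + 458 * (1 + t ^ 2 + t ^ 4 + t ^ 6 + t ^ 8 + t ^ 10) := by ring
  nlinarith [key, sq_nonneg t, sq_nonneg (t ^ 2), sq_nonneg (t ^ 3), sq_nonneg (t ^ 4),
    sq_nonneg (t ^ 5),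
    sq_nonneg (1 + (232/89) * t ^ 1 + (-575078946549/81524000000) * t ^ 2 + (-160875320793/20381000000) * t ^ 3 + (255388550777/40762000000) * t ^ 4 + (165178247277/40762000000) * t ^ 5),
    sq_nonneg (1 * t ^ 1 + (87518660900838/58854900242861) * t ^ 2 + (-114210923205830/58854900242861) * t ^ 3 + (-125216457875686/58854900242861) * t ^ 4 + (58991081592557/117709800485722) * t ^ 5),
    sq_nonneg (1 * t ^ 2 + (1410840897723520632465477272900028/6157110801792726886765768178492851) * t ^ 3 + (-6638752464348029623690983978290846/6157110801792726886765768178492851) * t ^ 4 + (-1469205377332693254943535832697846/6157110801792726886765768178492851) * t ^ 5),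
    sq_nonneg (1 * t ^ 3 + (2652775071253914635238461478773471372974659/17958882778168078770280452838278491638071299) * t ^ 4 + (-11583864983876654995463728814244855783865485/35917765556336157540560905676556983276142598) * t ^ 5),
    sq_nonneg (1 * t ^ 4 + (632622740865030933366436456037486734450514187337609/12608191908651358421471148919731394643308267141177232) * t ^ 5),
    sq_nonneg (t ^ 5)]
end

section
/- Let a, c : ℝ → ℝ be C² functions and define F : ℝ² → ℝ⁵ by F(u,θ) = (a(u)cos θ, a(u)sin θ, u·a(u)cos 2θ, u·a(u)sin 2θ, c(u)). Then for every (u,θ) ∈ ℝ², the determinant of the 5×5 matrix whose rows are, in order, ∂_uF, ∂_θF, ∂_{uu}F, ∂_{uθ}F, ∂_{θθ}F (all evaluated at (u,θ)) equals −2·a(u)³·H(u), where H(u) = (a(u) − 3u·a'(u))·c''(u) + (3u·a''(u) − 2a'(u))·c'(u). In particular, the five derivative vectors of F at (u,θ) are linearly independent if and only if a(u) ≠ 0 and H(u) ≠ 0. -/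
/-!
Every row of the matrix has the form `r(θ) = r(0) · R(θ)`, where `R(θ)` rotates the
`(x₁, x₂)`-plane by `θ` and the `(x₃, x₄)`-plane by `2θ`. Hence the determinant does not depend
on `θ`, and at `θ = 0` the matrix splits into a `2 × 2` block (coordinates `x₂, x₄`) and a
`3 × 3` block (coordinates `x₁, x₃, x₅`). For the ansatz `b = u a` the `2 × 2` block has
determinant `2a²`, and the `3 × 3` block contributes `-a H`.
-/

open Real

noncomputable def rotVec (A B C θ : ℝ) : Fin 5 → ℝ :=
  ![A * cos θ, A * sin θ, B * cos (2 * θ), B * sin (2 * θ), C]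

noncomputable def rotVecAngleDeriv (A B θ : ℝ) : Fin 5 → ℝ :=
  ![-(A * sin θ), A * cos θ, -(2 * B * sin (2 * θ)), 2 * B * cos (2 * θ), 0]

lemma hasDerivAt_rotVec_of_hasDerivAt {A B C : ℝ → ℝ} {A' B' C' u : ℝ} (θ : ℝ)
    (hA : HasDerivAt A A' u) (hB : HasDerivAt B B' u) (hC : HasDerivAt C C' u) :
    HasDerivAt (fun u => rotVec (A u) (B u) (C u) θ) (rotVec A' B' C' θ) u := by
  refine hasDerivAt_pi.2 fun i => ?_
  fin_cases i
  · exact hA.mul_const _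
  · exact hA.mul_const _
  · exact hB.mul_const _
  · exact hB.mul_const _
  · exact hC

lemma hasDerivAt_rotVec_angle (A B C θ : ℝ) :
    HasDerivAt (rotVec A B C) (rotVecAngleDeriv A B θ) θ := by
  have h2 : HasDerivAt (fun θ : ℝ => 2 * θ) 2 θ :=
    ((hasDerivAt_id θ).const_mul 2).congr_deriv (mul_one 2)
  refine hasDerivAt_pi.2 fun i => ?_
  fin_cases i
  · exact ((hasDerivAt_cos θ).const_mul A).congr_deriv (by simp [rotVecAngleDeriv])
  · exact (hasDerivAt_sin θ).const_mul A
  · exact (h2.cos.const_mul B).congr_deriv (by simp [rotVecAngleDeriv]; ring)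
  · exact (h2.sin.const_mul B).congr_deriv (by simp [rotVecAngleDeriv]; ring)
  · exact hasDerivAt_const θ C

lemma hasDerivAt_rotVecAngleDeriv (A B θ : ℝ) :
    HasDerivAt (rotVecAngleDeriv A B) (-rotVec A (4 * B) 0 θ) θ := by
  have h2 : HasDerivAt (fun θ : ℝ => 2 * θ) 2 θ :=
    ((hasDerivAt_id θ).const_mul 2).congr_deriv (mul_one 2)
  refine hasDerivAt_pi.2 fun i => ?_
  fin_cases i
  · exact ((hasDerivAt_sin θ).const_mul A).neg.congr_deriv (by simp [rotVec])
  · exact ((hasDerivAt_cos θ).const_mul A).congr_deriv (by simp [rotVec])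
  · exact (h2.sin.const_mul (2 * B)).neg.congr_deriv (by simp [rotVec]; ring)
  · exact (h2.cos.const_mul (2 * B)).congr_deriv (by simp [rotVec]; ring)
  · exact (hasDerivAt_const θ 0).congr_deriv (by simp [rotVec])

lemma det_rotVec_rows (A B A₁ B₁ C₁ A₂ B₂ C₂ θ : ℝ) :
    (Matrix.of ![rotVec A₁ B₁ C₁ θ, rotVecAngleDeriv A B θ, rotVec A₂ B₂ C₂ θ,
      rotVecAngleDeriv A₁ B₁ θ, -rotVec A (4 * B) 0 θ]).det
      = 2 * (A * B₁ - B * A₁) * (C₁ * (A * B₂ - 4 * B * A₂) + C₂ * (4 * B * A₁ - A * B₁)) := by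
  simp [Matrix.det_succ_row_zero, Fin.sum_univ_succ, rotVec, rotVecAngleDeriv, Fin.succAbove]
  linear_combination
    (2 * (A * B₁ - B * A₁) * (C₁ * (A * B₂ - 4 * B * A₂) + C₂ * (4 * B * A₁ - A * B₁))) *
      ((sin θ ^ 2 + cos θ ^ 2) * sin_sq_add_cos_sq (2 * θ) + sin_sq_add_cos_sq θ)

lemma det_rotVec_rows_ansatz (A A₁ A₂ C₁ C₂ u θ : ℝ) :
    (Matrix.of ![rotVec A₁ (A + u * A₁) C₁ θ, rotVecAngleDeriv A (u * A) θ,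
      rotVec A₂ (2 * A₁ + u * A₂) C₂ θ, rotVecAngleDeriv A₁ (A + u * A₁) θ,
      -rotVec A (4 * (u * A)) 0 θ]).det
      = -2 * A ^ 3 * ((A - 3 * u * A₁) * C₂ + (3 * u * A₂ - 2 * A₁) * C₁) := by
  rw [det_rotVec_rows]
  ring

lemma linearIndependent_iff_det_ne_zero {K m : Type*} [Field K] [Fintype m] [DecidableEq m]
    (v : m → m → K) : LinearIndependent K v ↔ (Matrix.of v).det ≠ 0 := by
  rw [← isUnit_iff_ne_zero, ← Matrix.isUnit_iff_isUnit_det]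
  exact Matrix.linearIndependent_rows_iff_isUnit

lemma ContDiff.hasDerivAt_deriv {f : ℝ → ℝ} (hf : ContDiff ℝ 2 f) (x : ℝ) :
    HasDerivAt (deriv f) (deriv (deriv f) x) x :=
  ((contDiff_succ_iff_deriv.mp hf).2.2.differentiable one_ne_zero x).hasDerivAt

/-- for `C²` functions `a, c : ℝ → ℝ` and
`F(u,θ) = (a(u)cos θ, a(u)sin θ, u·a(u)cos 2θ, u·a(u)sin 2θ, c(u))`,
the determinant of the 5×5 matrix with rows `∂_uF, ∂_θF, ∂_{uu}F, ∂_{uθ}F, ∂_{θθ}F`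
equals `−2·a(u)³·H(u)`, where
`H(u) = (a(u) − 3u a'(u)) c''(u) + (3u a''(u) − 2a'(u)) c'(u)`; and the five
derivative vectors are linearly independent iff `a(u) ≠ 0` and `H(u) ≠ 0`. -/
theorem osculating_det_rot_ansatz (a c : ℝ → ℝ)
    (ha : ContDiff ℝ 2 a) (hc : ContDiff ℝ 2 c)
    (F : ℝ → ℝ → Fin 5 → ℝ)
    (hF : ∀ u θ, F u θ =
      ![a u * cos θ, a u * sin θ, u * a u * cos (2 * θ), u * a u * sin (2 * θ), c u])
    (u θ : ℝ) :
    (Matrix.of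
      ![deriv (fun u' => F u' θ) u,
        deriv (fun θ' => F u θ') θ,
        deriv (fun u' => deriv (fun u'' => F u'' θ) u') u,
        deriv (fun θ' => deriv (fun u' => F u' θ') u) θ,
        deriv (fun θ' => deriv (fun θ'' => F u θ'') θ') θ]).det
      = -2 * (a u) ^ 3 *
        ((a u - 3 * u * deriv a u) * deriv (deriv c) u
          + (3 * u * deriv (deriv a) u - 2 * deriv a u) * deriv c u)
    ∧ (LinearIndependent ℝ
        ![deriv (fun u' => F u' θ) u,
          deriv (fun θ' => F u θ') θ,
          deriv (fun u' => deriv (fun u'' => F u'' θ) u') u,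
          deriv (fun θ' => deriv (fun u' => F u' θ') u) θ,
          deriv (fun θ' => deriv (fun θ'' => F u θ'') θ') θ]
        ↔ a u ≠ 0 ∧
          (a u - 3 * u * deriv a u) * deriv (deriv c) u
            + (3 * u * deriv (deriv a) u - 2 * deriv a u) * deriv c u ≠ 0) := by
  obtain rfl : F = fun u θ => rotVec (a u) (u * a u) (c u) θ := funext fun u => funext (hF u)
  have hda x := (ha.differentiable two_ne_zero x).hasDerivAt
  have hdc x := (hc.differentiable two_ne_zero x).hasDerivAt
  have hdua x : HasDerivAt (fun x => x * a x) (a x + x * deriv a x) x :=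
    ((hasDerivAt_id x).mul (hda x)).congr_deriv (by simp)
  have hddua : HasDerivAt (fun x => a x + x * deriv a x)
      (2 * deriv a u + u * deriv (deriv a) u) u :=
    ((hda u).add ((hasDerivAt_id u).mul (ha.hasDerivAt_deriv u))).congr_deriv (by simp; ring)
  have hFu x φ : deriv (fun u' => rotVec (a u') (u' * a u') (c u') φ) x
      = rotVec (deriv a x) (a x + x * deriv a x) (deriv c x) φ :=
    (hasDerivAt_rotVec_of_hasDerivAt φ (hda x) (hdua x) (hdc x)).deriv
  have hFθ φ : deriv (rotVec (a u) (u * a u) (c u)) φ = rotVecAngleDeriv (a u) (u * a u) φ :=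
    (hasDerivAt_rotVec_angle _ _ _ φ).deriv
  beta_reduce
  simp only [hFu, hFθ]
  rw [(hasDerivAt_rotVec_of_hasDerivAt θ (ha.hasDerivAt_deriv u) hddua
      (hc.hasDerivAt_deriv u)).deriv, (hasDerivAt_rotVec_angle _ _ _ θ).deriv,
    (hasDerivAt_rotVecAngleDeriv _ _ θ).deriv, linearIndependent_iff_det_ne_zero,
    det_rotVec_rows_ansatz]
  exact ⟨rfl, by simp⟩
end
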